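/- Let (X_m)_{m∈ℕ} be a family of topological spaces, each of which is a Noetherian topological space, together with continuous maps π_m : X_m → X_{m−1} for every m ≥ 1. Suppose given points x_{m,q} ∈ X_m for all m ∈ ℕ and q ∈ ℕ satisfying the compatibility π_m(x_{m,q}) = x_{m−1,q} for all m ≥ 1 and all q. Then there exist subsets Z_m ⊆ X_m for all m ∈ ℕ such that: each Z_m is closed and irreducible; (i) for every m the set { q ∈ ℕ | x_{m,q} ∈ Z_m } is infinite; (ii) for every m, Z_m equals the closure of { x_{m,q} | q ∈ ℕ, x_{m,q} ∈ Z_m }; and (iii) for every m ≥ 1, π_m(Z_m) ⊆ Z_{m−1} and the closure of π_m(Z_m) equals Z_{m−1} (i.e., the induced map Z_m → Z_{m−1} is dominant). -/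

import Mathlib

/-!
Call a closed set *frequent* for a sequence `y` if it contains `y q` for infinitely many `q`.
By Noetherianity every frequent closed set contains a minimal one, and a minimal frequent
closed set `Z` is the closure of any of its subsets that is still hit infinitely often; this
makes `Z` irreducible and identifies it with the closure of the points of the sequence it
contains. Choosing `Z_{m+1}` minimal inside `π_m⁻¹(Z_m)`, which is frequent for `x_{m+1}` by
compatibility, the image `π_m(Z_{m+1})` lies in `Z_m` and is hit by `x_m` infinitely often,
so it is dense in `Z_m`.
-/

open Set TopologicalSpace

def IsFrequentClosed {α : Type*} [TopologicalSpace α] (y : ℕ → α) (F : Set α) : Prop :=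
  IsClosed F ∧ {q | y q ∈ F}.Infinite

namespace IsFrequentClosed

variable {α : Type*} [TopologicalSpace α] {y : ℕ → α} {Z : Set α}

theorem exists_minimal_subset [NoetherianSpace α] {C : Set α} (hC : IsFrequentClosed y C) :
    ∃ Z ⊆ C, Minimal (IsFrequentClosed y) Z := by
  obtain ⟨Z, hZC, hZ, hZmin⟩ := exists_minimal_le_of_wellFoundedLT
    (fun F : Closeds α => {q | y q ∈ (F : Set α)}.Infinite) ⟨C, hC.1⟩ hC.2
  exact ⟨Z, hZC, ⟨Z.isClosed, hZ⟩, fun F hF hFZ => hZmin (y := ⟨F, hF.1⟩) hF.2 hFZ⟩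

theorem closure_eq_of_minimal (hZ : Minimal (IsFrequentClosed y) Z) {S : Set α} (hSZ : S ⊆ Z)
    (hS : {q | y q ∈ S}.Infinite) : closure S = Z :=
  hZ.eq_of_le ⟨isClosed_closure, hS.mono fun _ hq => subset_closure hq⟩
    (closure_minimal hSZ hZ.prop.1)

theorem isIrreducible_of_minimal (hZ : Minimal (IsFrequentClosed y) Z) : IsIrreducible Z := by
  obtain ⟨q, hq⟩ := hZ.prop.2.nonempty
  refine ⟨⟨y q, hq⟩, isPreirreducible_iff_isClosed_union_isClosed.2 fun A B hA hB hAB => ?_⟩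
  have hsplit : {q | y q ∈ Z} ⊆ {q | y q ∈ Z ∩ A} ∪ {q | y q ∈ Z ∩ B} :=
    fun q hq => (hAB hq).imp (⟨hq, ·⟩) (⟨hq, ·⟩)
  rcases infinite_union.1 (hZ.prop.2.mono hsplit) with hA' | hB'
  · exact .inl <| closure_eq_of_minimal hZ inter_subset_left hA' ▸
      closure_minimal inter_subset_right hA
  · exact .inr <| closure_eq_of_minimal hZ inter_subset_left hB' ▸
      closure_minimal inter_subset_right hB

theorem closure_image_eq_of_minimal (hZ : Minimal (IsFrequentClosed y) Z) :
    closure (y '' {q | y q ∈ Z}) = Z :=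
  closure_eq_of_minimal hZ (image_subset_iff.2 fun _ hq => hq)
    (hZ.prop.2.mono fun _ hq => mem_image_of_mem y hq)

theorem preimage {β : Type*} [TopologicalSpace β] {f : β → α} (hf : Continuous f)
    {y' : ℕ → β} (hy : ∀ q, f (y' q) = y q) (hZ : IsFrequentClosed y Z) :
    IsFrequentClosed y' (f ⁻¹' Z) :=
  ⟨hZ.1.preimage hf, by simpa only [mem_preimage, hy] using hZ.2⟩

end IsFrequentClosed

open IsFrequentClosed in
theorem exists_minimal_isFrequentClosed_chain
    {X : ℕ → Type*} [∀ m, TopologicalSpace (X m)] [∀ m, NoetherianSpace (X m)]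
    {π : ∀ m, X (m + 1) → X m} (hπ : ∀ m, Continuous (π m))
    {x : ∀ m, ℕ → X m} (hx : ∀ m q, π m (x (m + 1) q) = x m q) :
    ∃ Z : ∀ m, Set (X m),
      (∀ m, Minimal (IsFrequentClosed (x m)) (Z m)) ∧ ∀ m, Z (m + 1) ⊆ π m ⁻¹' Z m := by
  have hstep : ∀ m (Z : {Z : Set (X m) // Minimal (IsFrequentClosed (x m)) Z}),
      ∃ W ⊆ π m ⁻¹' Z.1, Minimal (IsFrequentClosed (x (m + 1))) W :=
    fun m Z => (Z.2.prop.preimage (hπ m) (hx m)).exists_minimal_subset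
  choose next hnext_sub hnext using hstep
  obtain ⟨Z₀, -, hZ₀⟩ := exists_minimal_subset (C := univ) (y := x 0)
    ⟨isClosed_univ, by simpa only [mem_univ, ofPred_true] using infinite_univ⟩
  let Z : ∀ m, {Z : Set (X m) // Minimal (IsFrequentClosed (x m)) Z} :=
    fun m => Nat.rec ⟨Z₀, hZ₀⟩ (fun m Zm => ⟨next m Zm, hnext m Zm⟩) m
  exact ⟨fun m => (Z m).1, fun m => (Z m).2, fun m => hnext_sub m (Z m)⟩

open IsFrequentClosed in
/-- The abstract generic-limit construction: given an inverse system of Noetherian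
topological spaces `X_m` with continuous transition maps `π_m : X_{m+1} → X_m`, and a
family of compatible points `x_{m,q}` (one for each stage `m` and each index `q`),
there are irreducible closed subsets `Z_m ⊆ X_m` such that (i) for every `m`
infinitely many `q` satisfy `x_{m,q} ∈ Z_m`; (ii) `Z_m` is the closure of the set of
those points `x_{m,q}` lying in `Z_m`; and (iii) `π_m` maps `Z_{m+1}` into `Z_m`
with dense image (the induced map is dominant). -/
theorem generic_limit_construction
    (X : ℕ → Type*) [∀ m, TopologicalSpace (X m)]
    [∀ m, TopologicalSpace.NoetherianSpace (X m)]
    (π : ∀ m, X (m + 1) → X m) (hπ : ∀ m, Continuous (π m))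
    (x : ∀ m, ℕ → X m) (hx : ∀ m q, π m (x (m + 1) q) = x m q) :
    ∃ Z : ∀ m, Set (X m),
      (∀ m, IsClosed (Z m) ∧ IsIrreducible (Z m)) ∧
      (∀ m, {q : ℕ | x m q ∈ Z m}.Infinite) ∧
      (∀ m, Z m = closure (x m '' {q : ℕ | x m q ∈ Z m})) ∧
      (∀ m, π m '' Z (m + 1) ⊆ Z m ∧ closure (π m '' Z (m + 1)) = Z m) := by
  obtain ⟨Z, hZ, hZsub⟩ := exists_minimal_isFrequentClosed_chain hπ hx
  refine ⟨Z, fun m => ⟨(hZ m).prop.1, isIrreducible_of_minimal (hZ m)⟩, fun m => (hZ m).prop.2,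
    fun m => (closure_image_eq_of_minimal (hZ m)).symm, fun m => ?_⟩
  have hmaps : π m '' Z (m + 1) ⊆ Z m := image_subset_iff.2 (hZsub m)
  refine ⟨hmaps, closure_eq_of_minimal (hZ m) hmaps ((hZ (m + 1)).prop.2.mono fun q hq => ?_)⟩
  exact ⟨x (m + 1) q, hq, hx m q⟩
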